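/- Let a_n = 1 + a/n + o(1/n) with a ≠ 0. Then for each fixed t > 0, (1/n) Σ_{k=1}^{[nt]} a_n^{-2k} → (1 − e^{-2at})/(2a) as n → ∞. -/

import Mathlib

open Filter Real Topology

/-! With `r_n = a_n⁻²` the sum is geometric: `∑_{k=1}^{m} r_n^k = r_n (r_n^m - 1) / (r_n - 1)`.
Differentiating `x ↦ x⁻²` at `1` turns `n (a_n - 1) → a` into `n (r_n - 1) → b := -2a`; then
`m log r_n ≈ (m / n) b` gives `r_n^m → e^{tb}` for `m = ⌊nt⌋`, and dividing the geometric sum by `n`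
yields `(e^{tb} - 1) / b`. -/

theorem tendsto_of_tendsto_natCast_mul_sub {x : ℕ → ℝ} {c a : ℝ}
    (h : Tendsto (fun n : ℕ => (n : ℝ) * (x n - c)) atTop (𝓝 a)) :
    Tendsto x atTop (𝓝 c) := by
  have hsub : Tendsto (fun n : ℕ => (n : ℝ) * (x n - c) * (1 / n)) atTop (𝓝 (a * 0)) :=
    h.mul tendsto_one_div_atTop_nhds_zero_nat
  rw [mul_zero] at hsub
  have hx : Tendsto (fun n => x n - c + c) atTop (𝓝 (0 + c)) := by
    refine (hsub.congr' ?_).add_const c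
    filter_upwards [eventually_ne_atTop 0] with n hn
    field_simp
  simpa using hx

theorem HasDerivAt.tendsto_natCast_mul_sub_comp {g : ℝ → ℝ} {g' c a : ℝ} {x : ℕ → ℝ}
    (hg : HasDerivAt g g' c) (hx : Tendsto (fun n : ℕ => (n : ℝ) * (x n - c)) atTop (𝓝 a)) :
    Tendsto (fun n : ℕ => (n : ℝ) * (g (x n) - g c)) atTop (𝓝 (a * g')) := by
  have hslope : Tendsto (fun n => dslope g c (x n)) atTop (𝓝 g') := by
    rw [← hg.deriv, ← dslope_same]
    exact (continuousAt_dslope_same.mpr hg.differentiableAt).tendsto.comp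
      (tendsto_of_tendsto_natCast_mul_sub hx)
  -- `dslope` makes `g (x n) - g c = (x n - c) * dslope g c (x n)` exact, also where `x n = c`.
  refine (hx.mul hslope).congr fun n => ?_
  rw [mul_assoc, ← smul_eq_mul (x n - c), sub_smul_dslope]

theorem tendsto_pow_of_tendsto_natCast_mul_sub_one {r : ℕ → ℝ} {m : ℕ → ℕ} {b t : ℝ}
    (hr : Tendsto (fun n : ℕ => (n : ℝ) * (r n - 1)) atTop (𝓝 b))
    (hm : Tendsto (fun n : ℕ => (m n : ℝ) / n) atTop (𝓝 t)) :
    Tendsto (fun n => r n ^ m n) atTop (𝓝 (exp (t * b))) := by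
  have hlog : Tendsto (fun n : ℕ => (n : ℝ) * log (r n)) atTop (𝓝 b) := by
    simpa using (hasDerivAt_log one_ne_zero).tendsto_natCast_mul_sub_comp hr
  have hexp := (continuous_exp.tendsto _).comp (hm.mul hlog)
  refine hexp.congr' ?_
  filter_upwards [(tendsto_of_tendsto_natCast_mul_sub hr).eventually (lt_mem_nhds one_pos),
    eventually_ne_atTop 0] with n hrn hn
  have hcancel : (m n : ℝ) / n * (n * log (r n)) = m n * log (r n) := by field_simp
  rw [Function.comp_apply, hcancel, exp_nat_mul, exp_log hrn]

theorem tendsto_one_div_mul_sum_Icc_pow {r : ℕ → ℝ} {m : ℕ → ℕ} {b t : ℝ} (hb : b ≠ 0)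
    (hr : Tendsto (fun n : ℕ => (n : ℝ) * (r n - 1)) atTop (𝓝 b))
    (hm : Tendsto (fun n : ℕ => (m n : ℝ) / n) atTop (𝓝 t)) :
    Tendsto (fun n : ℕ => (1 / (n : ℝ)) * ∑ k ∈ Finset.Icc 1 (m n), r n ^ k) atTop
      (𝓝 ((exp (t * b) - 1) / b)) := by
  have hlim := ((tendsto_of_tendsto_natCast_mul_sub hr).mul
    ((tendsto_pow_of_tendsto_natCast_mul_sub_one hr hm).sub_const 1)).div hr hb
  rw [one_mul] at hlim
  refine hlim.congr' ?_
  filter_upwards [hr.eventually_ne hb] with n hn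
  have hr1 : r n ≠ 1 := fun h => hn (by simp [h])
  rw [Pi.div_apply, ← Finset.Ico_add_one_right_eq_Icc, geom_sum_Ico hr1 (Nat.le_add_left 1 _)]
  field_simp
  ring

theorem cesaro_sum_inv_pow_tendsto_general (a : ℝ) (ha : a ≠ 0) (aseq : ℕ → ℝ)
    (haseq : Tendsto (fun n : ℕ => (n : ℝ) * (aseq n - 1)) atTop (nhds a))
    (t : ℝ) (ht : 0 < t) :
    Tendsto
      (fun n : ℕ => (1 / (n : ℝ)) * ∑ k ∈ Finset.Icc 1 ⌊(n : ℝ) * t⌋₊,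
        aseq n ^ (-(2 * (k : ℤ))))
      atTop (nhds ((1 - Real.exp (-2 * a * t)) / (2 * a))) := by
  have hr : Tendsto (fun n : ℕ => (n : ℝ) * (aseq n ^ (-2 : ℤ) - 1)) atTop (𝓝 (-2 * a)) := by
    simpa [mul_comm] using
      (hasDerivAt_zpow (-2) (1 : ℝ) (.inl one_ne_zero)).tendsto_natCast_mul_sub_comp haseq
  have hm : Tendsto (fun n : ℕ => (⌊(n : ℝ) * t⌋₊ : ℝ) / n) atTop (𝓝 t) := by
    refine ((tendsto_nat_floor_mul_div_atTop ht.le).comp tendsto_natCast_atTop_atTop).congr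
      fun n => ?_
    simp only [Function.comp_apply, mul_comm]
  convert tendsto_one_div_mul_sum_Icc_pow (by simpa using ha) hr hm using 2 with n
  · refine congrArg _ (Finset.sum_congr rfl fun k _ => ?_)
    rw [← zpow_natCast, ← zpow_mul]
    ring_nf
  · rw [← neg_div_neg_eq]
    ring_nf

/-- If `a_n = 1 + a/n + o(1/n)` with `a ≠ 0` (and `a_n > 0` for large `n`), then for each
fixed `t > 0`, `(1/n) ∑_{k=1}^{[nt]} a_n^{-2k} → (1 − e^{-2at})/(2a)` as `n → ∞`. -/
theorem cesaro_sum_inv_pow_tendsto (a : ℝ) (ha : a ≠ 0) (aseq : ℕ → ℝ)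
    (hpos : ∀ᶠ n in atTop, 0 < aseq n)
    (haseq : Tendsto (fun n : ℕ => (n : ℝ) * (aseq n - 1)) atTop (nhds a))
    (t : ℝ) (ht : 0 < t) :
    Tendsto
      (fun n : ℕ => (1 / (n : ℝ)) * ∑ k ∈ Finset.Icc 1 ⌊(n : ℝ) * t⌋₊,
        aseq n ^ (-(2 * (k : ℤ))))
      atTop (nhds ((1 - Real.exp (-2 * a * t)) / (2 * a))) :=
  cesaro_sum_inv_pow_tendsto_general a ha aseq haseq t ht
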